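/- For every t ∈ [0,1], the function f₀(x) = e^{−x} on ℝ₊ majorizes g_t(x) = ((t+1)/2) e^{−x} (x − 1 + √((1−t)/(1+t)))² in the continuous sense. -/

import Mathlib

/-!
The excess `u ↦ ∫ (h - u)₊` is convex in `h`: for a probability measure `ν`,
`∫ (∫ K_q dν(q) - u)₊ ≤ ∫∫ (K_q - u)₊ dν(q)` (Jensen, then Tonelli). It therefore suffices to
write `g_t` as a mixture of rearrangements of `e^{-x}` on `[0, ∞)`, all of which have the same
excess as `e^{-x}`.

Put `L = 1 - √((1-t)/(1+t))` and `c = (t+1)/2`, so that `c ((1-L)² + 1) = 1` and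
`g_t(x) = c e^{-x} (x - L)²`. Keep `e^{-x}` on `[0, p)` and move its tail `[p, ∞)` to start at
`L + a`, where `a` has density `a e^{-a}` (Gamma(2, 1)) and, independently, `P(p > x) = c (L - x)²`
on `[0, L]`, the remaining mass `1 - c L²` sitting at `p = 0`. Averaging, the head contributes
`c e^{-x} (L - x)₊²` and the moved tails `E[e^{-p}] e^{L-x} (x - L)₊² / 2 = c e^{-x} (x - L)₊²`.
-/

open MeasureTheory Set Real ProbabilityTheory Function Filter Topology
open scoped ENNReal

section Mixture

variable {α P : Type*} [MeasurableSpace α] [MeasurableSpace P]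

theorem ofReal_integral_le_lintegral_ofReal {μ : Measure α} (f : α → ℝ) :
    ENNReal.ofReal (∫ x, f x ∂μ) ≤ ∫⁻ x, ENNReal.ofReal (f x) ∂μ := by
  by_cases hf : Integrable f μ
  · rw [integral_eq_lintegral_pos_part_sub_lintegral_neg_part hf]
    exact (ENNReal.ofReal_le_ofReal (sub_le_self _ ENNReal.toReal_nonneg)).trans
      ENNReal.ofReal_toReal_le
  · simp [integral_undef hf]

theorem ofReal_integral_sub_le_lintegral_ofReal_sub {ν : Measure P} [IsProbabilityMeasure ν]
    (f : P → ℝ) {u : ℝ} (hu : 0 ≤ u) :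
    ENNReal.ofReal (∫ p, f p ∂ν - u) ≤ ∫⁻ p, ENNReal.ofReal (f p - u) ∂ν := by
  by_cases hf : Integrable f ν
  · have hsub : ∫ p, f p ∂ν - u = ∫ p, (f p - u) ∂ν := by
      simp [integral_sub hf (integrable_const u)]
    rw [hsub]
    exact ofReal_integral_le_lintegral_ofReal _
  · rw [integral_undef hf, zero_sub, ENNReal.ofReal_eq_zero.2 (neg_nonpos.2 hu)]
    exact zero_le

theorem lintegral_ofReal_integral_sub_le {μ : Measure α} [SFinite μ] {ν : Measure P}
    [IsProbabilityMeasure ν] {K : P → α → ℝ} (hK : Measurable (uncurry K)) {u : ℝ} (hu : 0 ≤ u)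
    {B : ℝ≥0∞} (hB : ∀ᵐ p ∂ν, ∫⁻ x, ENNReal.ofReal (K p x - u) ∂μ ≤ B) :
    ∫⁻ x, ENNReal.ofReal (∫ p, K p x ∂ν - u) ∂μ ≤ B :=
  calc ∫⁻ x, ENNReal.ofReal (∫ p, K p x ∂ν - u) ∂μ
      ≤ ∫⁻ x, ∫⁻ p, ENNReal.ofReal (K p x - u) ∂ν ∂μ :=
        lintegral_mono fun x => ofReal_integral_sub_le_lintegral_ofReal_sub _ hu
    _ = ∫⁻ p, ∫⁻ x, ENNReal.ofReal (K p x - u) ∂μ ∂ν :=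
        lintegral_lintegral_swap ((hK.comp measurable_swap).sub_const u).ennreal_ofReal.aemeasurable
    _ ≤ ∫⁻ _, B ∂ν := lintegral_mono_ae hB
    _ = B := by simp

theorem integral_max_sub_le_of_lintegral_le {μ : Measure α} {f g : α → ℝ} (hf : Measurable f)
    (hg : Measurable g) {u : ℝ}
    (hfin : ∫⁻ x, ENNReal.ofReal (f x - u) ∂μ ≠ ∞)
    (h : ∫⁻ x, ENNReal.ofReal (g x - u) ∂μ ≤ ∫⁻ x, ENNReal.ofReal (f x - u) ∂μ) :
    ∫ x, max (g x - u) 0 ∂μ ≤ ∫ x, max (f x - u) 0 ∂μ := by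
  have key {h : α → ℝ} (hh : Measurable h) :
      ∫ x, max (h x - u) 0 ∂μ = (∫⁻ x, ENNReal.ofReal (h x - u) ∂μ).toReal := by
    rw [integral_eq_lintegral_of_nonneg_ae (f := fun x => max (h x - u) 0)
      (ae_of_all _ fun _ => le_max_right _ _)
      ((hh.sub_const u).max measurable_const).aestronglyMeasurable]
    simp
  rw [key hg, key hf]
  exact ENNReal.toReal_mono hfin h

end Mixture

theorem setLIntegral_Ici_comp_sub (F : ℝ → ℝ≥0∞) (b d : ℝ) :
    ∫⁻ x in Ici b, F (x - d) = ∫⁻ y in Ici (b - d), F y := by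
  rw [← lintegral_indicator measurableSet_Ici, ← lintegral_indicator measurableSet_Ici,
    ← lintegral_sub_right_eq_self ((Ici (b - d)).indicator F) d]
  congr with x
  simp [indicator_apply]

/-- `f` on `[0, p)` followed by its part on `[p, ∞)` moved to start at `b`; for `0 ≤ p ≤ b` this is
a rearrangement of `f` on `[0, ∞)`. -/
noncomputable def moveTail (f : ℝ → ℝ) (p b : ℝ) : ℝ → ℝ :=
  (Iio p).indicator f + (Ici b).indicator fun x => f (x - (b - p))

theorem measurable_moveTail {f : ℝ → ℝ} (hf : Measurable f) :
    Measurable fun z : (ℝ × ℝ) × ℝ => moveTail f z.1.1 z.1.2 z.2 := by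
  simp only [moveTail, Pi.add_apply, indicator_apply, mem_Iio, mem_Ici]
  exact (Measurable.ite (measurableSet_lt measurable_snd measurable_fst.fst)
    (hf.comp measurable_snd) measurable_const).add
    (Measurable.ite (measurableSet_le measurable_fst.snd measurable_snd)
      (hf.comp (measurable_snd.sub (measurable_fst.snd.sub measurable_fst.fst))) measurable_const)

theorem setLIntegral_Ici_ofReal_moveTail_sub (f : ℝ → ℝ) {p b u : ℝ} (hp : 0 ≤ p) (hpb : p ≤ b)
    (hu : 0 ≤ u) :
    ∫⁻ x in Ici 0, ENNReal.ofReal (moveTail f p b x - u) =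
      ∫⁻ x in Ici 0, ENNReal.ofReal (f x - u) := by
  have head : ∫⁻ x in Ico 0 p, ENNReal.ofReal (moveTail f p b x - u) =
      ∫⁻ x in Ico 0 p, ENNReal.ofReal (f x - u) :=
    setLIntegral_congr_fun measurableSet_Ico fun x hx => by
      simp [moveTail, hx.2, (hx.2.trans_le hpb).not_ge]
  have gap : ∫⁻ x in Ico p b, ENNReal.ofReal (moveTail f p b x - u) = 0 := by
    rw [setLIntegral_congr_fun (g := fun _ => 0) measurableSet_Ico fun x hx => by
      simp [moveTail, hx.1.not_gt, hx.2.not_ge, hu], lintegral_zero]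
  have tail : ∫⁻ x in Ici b, ENNReal.ofReal (moveTail f p b x - u) =
      ∫⁻ x in Ici p, ENNReal.ofReal (f x - u) := by
    rw [setLIntegral_congr_fun (g := fun x => ENNReal.ofReal (f (x - (b - p)) - u))
      measurableSet_Ici fun x hx => by
        simp [moveTail, mem_Ici.1 hx, (hpb.trans (mem_Ici.1 hx)).not_gt],
      setLIntegral_Ici_comp_sub (fun y => ENNReal.ofReal (f y - u)), sub_sub_cancel]
  have splitAt {g : ℝ → ℝ≥0∞} {a c : ℝ} (hac : a ≤ c) :
      ∫⁻ x in Ici a, g x = (∫⁻ x in Ico a c, g x) + ∫⁻ x in Ici c, g x := by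
    rw [← Ico_union_Ici_eq_Ici hac, lintegral_union measurableSet_Ici
      ((Iio_disjoint_Ici le_rfl).mono_left Ico_subset_Iio_self)]
  rw [splitAt hp, splitAt hpb, head, gap, tail, zero_add, ← splitAt hp]

theorem ae_nonneg_gammaMeasure (a r : ℝ) : ∀ᵐ x ∂gammaMeasure a r, 0 ≤ x := by
  rw [gammaMeasure, ae_withDensity_iff (by unfold gammaPDF; fun_prop)]
  exact ae_of_all _ fun x hx => not_lt.1 fun hneg => hx (gammaPDF_of_neg hneg)

theorem integral_gammaMeasure_two_one (φ : ℝ → ℝ) :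
    ∫ a, φ a ∂gammaMeasure 2 1 = ∫ a in Ici 0, a * exp (-a) * φ a := by
  rw [gammaMeasure, integral_withDensity_eq_integral_toReal_smul (f := gammaPDF 2 1)
    (by unfold gammaPDF; fun_prop)
    (ae_of_all _ fun _ => ENNReal.ofReal_lt_top), ← integral_indicator measurableSet_Ici]
  congr with a
  by_cases ha : 0 ≤ a
  · rw [indicator_of_mem (mem_Ici.2 ha), gammaPDF, gammaPDFReal, if_pos ha,
      ENNReal.toReal_ofReal (by positivity)]
    norm_num
  · simp [gammaPDF, gammaPDFReal, ha]

theorem integral_indicator_Iic_exp_gammaMeasure (y : ℝ) :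
    ∫ a, (Iic y).indicator exp a ∂gammaMeasure 2 1 = max y 0 ^ 2 / 2 := by
  have h (a : ℝ) : a * exp (-a) * (Iic y).indicator exp a = (Iic y).indicator (fun a => a) a := by
    by_cases hay : a ≤ y
    · simp [hay, mul_assoc, ← exp_add]
    · simp [hay]
  simp_rw [integral_gammaMeasure_two_one, h]
  rw [setIntegral_indicator measurableSet_Iic, Ici_inter_Iic]
  rcases le_total y 0 with hy | hy
  · rcases hy.lt_or_eq with hy | rfl
    · simp [Icc_eq_empty_of_lt hy, hy.le]
    · simp
  · rw [integral_Icc_eq_integral_Ioc, ← intervalIntegral.integral_of_le hy, integral_id,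
      max_eq_left hy]
    ring

/-- The law of the cut point `p`: `P(p > x) = c (L - x)²` for `x ∈ [0, L]`, and an atom at `0`. -/
noncomputable def cutPointMeasure (c L : ℝ) : Measure ℝ :=
  ENNReal.ofReal (1 - c * L ^ 2) • Measure.dirac 0 +
    (volume.restrict (Ioc 0 L)).withDensity fun p => ENNReal.ofReal (2 * c * (L - p))

section CutPointMeasure

variable {c L : ℝ}

theorem integral_Ioc_two_mul_sub {x : ℝ} (hxL : x ≤ L) :
    ∫ p in Ioc x L, 2 * c * (L - p) = c * (L - x) ^ 2 := by
  rw [← intervalIntegral.integral_of_le hxL, intervalIntegral.integral_const_mul,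
    intervalIntegral.integral_comp_sub_left (fun p => p) L, sub_self, integral_id]
  ring

theorem isProbabilityMeasure_cutPointMeasure (hc : 0 ≤ c) (hL : 0 ≤ L) (hcL : c * L ^ 2 ≤ 1) :
    IsProbabilityMeasure (cutPointMeasure c L) := by
  constructor
  have hmass : ∫⁻ p in Ioc 0 L, ENNReal.ofReal (2 * c * (L - p)) = ENNReal.ofReal (c * L ^ 2) := by
    rw [← ofReal_integral_eq_lintegral_ofReal, integral_Ioc_two_mul_sub hL, sub_zero]
    · exact (by fun_prop : Continuous fun p : ℝ => 2 * c * (L - p)).integrableOn_Ioc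
    · exact (ae_restrict_mem measurableSet_Ioc).mono fun p hp => by
        have := hp.2; positivity
  simp only [cutPointMeasure, Measure.add_apply, Measure.smul_apply, measure_univ, smul_eq_mul,
    mul_one, withDensity_apply _ MeasurableSet.univ, Measure.restrict_univ, hmass]
  rw [← ENNReal.ofReal_add (by linarith) (by positivity), sub_add_cancel, ENNReal.ofReal_one]

theorem ae_mem_Icc_cutPointMeasure (hL : 0 ≤ L) : ∀ᵐ p ∂cutPointMeasure c L, p ∈ Icc 0 L := by
  rw [cutPointMeasure, ae_add_measure_iff]
  constructor
  · exact Measure.ae_smul_measure ((ae_dirac_iff measurableSet_Icc).2 ⟨le_rfl, hL⟩) _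
  · exact (ae_withDensity_iff (by fun_prop)).2 <|
      (ae_restrict_mem measurableSet_Ioc).mono fun p hp _ => Ioc_subset_Icc_self hp

theorem integral_cutPointMeasure (hc : 0 ≤ c) (hL : 0 ≤ L) (hcL : c * L ^ 2 ≤ 1) {φ : ℝ → ℝ}
    (hφ : Measurable φ) {C : ℝ} (hφC : ∀ p ∈ Icc 0 L, |φ p| ≤ C) :
    ∫ p, φ p ∂cutPointMeasure c L =
      (1 - c * L ^ 2) * φ 0 + ∫ p in Ioc 0 L, 2 * c * (L - p) * φ p := by
  have := isProbabilityMeasure_cutPointMeasure hc hL hcL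
  have hint : Integrable φ (cutPointMeasure c L) :=
    .of_bound hφ.aestronglyMeasurable C ((ae_mem_Icc_cutPointMeasure hL).mono hφC)
  rw [cutPointMeasure, integrable_add_measure] at hint
  rw [cutPointMeasure, integral_add_measure hint.1 hint.2, integral_smul_measure, integral_dirac,
    ENNReal.toReal_ofReal (by linarith), smul_eq_mul,
    integral_withDensity_eq_integral_toReal_smul (by fun_prop)
      (ae_of_all _ fun _ => ENNReal.ofReal_lt_top)]
  congr 1
  refine setIntegral_congr_fun measurableSet_Ioc fun p hp => ?_
  have := hp.2
  rw [ENNReal.toReal_ofReal (by nlinarith), smul_eq_mul]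

theorem integral_indicator_Ioi_cutPointMeasure (hc : 0 ≤ c) (hL : 0 ≤ L) (hcL : c * L ^ 2 ≤ 1)
    {x : ℝ} (hx : 0 ≤ x) :
    ∫ p, (Ioi x).indicator 1 p ∂cutPointMeasure c L = c * max (L - x) 0 ^ 2 := by
  have h (p : ℝ) :
      2 * c * (L - p) * (Ioi x).indicator 1 p = (Ioi x).indicator (fun p => 2 * c * (L - p)) p := by
    by_cases hp : x < p <;> simp [hp]
  rw [integral_cutPointMeasure hc hL hcL (measurable_one.indicator measurableSet_Ioi) (C := 1)
      fun p _ => by by_cases hp : x < p <;> simp [hp],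
    indicator_of_notMem (s := Ioi x) (not_lt.2 hx), mul_zero, zero_add]
  simp_rw [h]
  rw [setIntegral_indicator measurableSet_Ioi, Ioc_inter_Ioi, max_eq_right hx]
  rcases le_total x L with hxL | hLx
  · rw [integral_Ioc_two_mul_sub hxL, max_eq_left (sub_nonneg.2 hxL)]
  · simp [Ioc_eq_empty_of_le hLx, max_eq_right (sub_nonpos.2 hLx)]

theorem integral_exp_neg_cutPointMeasure (hc : 0 ≤ c) (hL : 0 ≤ L) (hcL : c * L ^ 2 ≤ 1) :
    ∫ p, exp (-p) ∂cutPointMeasure c L = 1 - c * L ^ 2 + 2 * c * (exp (-L) - 1 + L) := by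
  have hderiv : ∀ p ∈ uIcc 0 L, HasDerivAt (fun p => 2 * c * (exp (-p) * (p - L + 1)))
      (2 * c * (L - p) * exp (-p)) p := fun p _ => by
    have h := ((hasDerivAt_neg' p).exp.mul (((hasDerivAt_id' p).sub_const L).add_const 1)).const_mul
      (2 * c)
    exact h.congr_deriv (by ring)
  rw [integral_cutPointMeasure hc hL hcL (by fun_prop) (C := 1) fun p hp => by
      rw [abs_of_pos (exp_pos _)]; exact exp_le_one_iff.2 (by linarith [hp.1]),
    ← intervalIntegral.integral_of_le hL, intervalIntegral.integral_eq_sub_of_hasDerivAt hderiv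
      ((by fun_prop : Continuous fun p => 2 * c * (L - p) * exp (-p)).intervalIntegrable _ _)]
  simp only [neg_zero, exp_zero]
  ring

end CutPointMeasure

theorem moveTail_exp_neg_eq (L p a x : ℝ) :
    moveTail (fun y => exp (-y)) p (L + a) x =
      exp (-x) * (Ioi x).indicator 1 p +
        exp (L - x) * (exp (-p) * (Iic (x - L)).indicator exp a) := by
  have hb : L + a ≤ x ↔ a ≤ x - L := by constructor <;> intro h <;> linarith
  by_cases hxp : x < p <;> by_cases hax : a ≤ x - L <;>
    simp [moveTail, hxp, hax, hb, ← exp_add] <;> ring_nf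

theorem integral_moveTail_exp_neg_mixture {c L : ℝ} (hL0 : 0 ≤ L) (hL1 : L ≤ 1)
    (hc : c * ((1 - L) ^ 2 + 1) = 1) {x : ℝ} (hx : 0 ≤ x) :
    ∫ q, moveTail (fun y => exp (-y)) q.1 (L + q.2) x
        ∂(cutPointMeasure c L).prod (gammaMeasure 2 1) = c * exp (-x) * (x - L) ^ 2 := by
  have hc0 : 0 ≤ c := by nlinarith [sq_nonneg (1 - L)]
  have hcL : c * L ^ 2 ≤ 1 := by nlinarith
  have := isProbabilityMeasure_cutPointMeasure hc0 hL0 hcL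
  have := isProbabilityMeasure_gammaMeasure two_pos one_pos
  have hcut : Integrable (fun p => exp (-p)) (cutPointMeasure c L) :=
    .of_bound (by fun_prop) 1 ((ae_mem_Icc_cutPointMeasure hL0).mono fun p hp => by
      rw [Real.norm_eq_abs, abs_of_pos (exp_pos _)]; exact exp_le_one_iff.2 (by linarith [hp.1]))
  have hgamma : Integrable ((Iic (x - L)).indicator exp) (gammaMeasure 2 1) :=
    .of_bound (measurable_exp.indicator measurableSet_Iic).aestronglyMeasurable (exp (x - L))
      (ae_of_all _ fun a => by
        by_cases ha : a ≤ x - L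
        · simp [ha, abs_of_pos (exp_pos _)]
        · simp [ha, (exp_pos _).le])
  have hfst : Integrable (fun q : ℝ × ℝ => exp (-x) * (Ioi x).indicator 1 q.1)
      ((cutPointMeasure c L).prod (gammaMeasure 2 1)) :=
    (Integrable.of_bound ((measurable_one.indicator measurableSet_Ioi).comp
      measurable_fst).aestronglyMeasurable 1 (ae_of_all _ fun q => by
        by_cases hq : x < q.1 <;> simp [hq])).const_mul _
  simp_rw [moveTail_exp_neg_eq]
  rw [integral_add hfst ((hcut.mul_prod hgamma).const_mul _), integral_const_mul,
    integral_fun_fst, probReal_univ, one_smul, integral_const_mul,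
    integral_prod_mul (fun p => exp (-p)) ((Iic (x - L)).indicator exp),
    integral_indicator_Ioi_cutPointMeasure hc0 hL0 hcL hx,
    integral_exp_neg_cutPointMeasure hc0 hL0 hcL, integral_indicator_Iic_exp_gammaMeasure]
  have hmean : 1 - c * L ^ 2 + 2 * c * (exp (-L) - 1 + L) = 2 * c * exp (-L) := by
    linear_combination -hc
  have hexp : exp (L - x) * exp (-L) = exp (-x) := by rw [← exp_add]; ring_nf
  rw [hmean]
  rcases le_total x L with hxL | hLx
  · rw [max_eq_left (sub_nonneg.2 hxL), max_eq_right (sub_nonpos.2 hxL)]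
    ring
  · rw [max_eq_right (sub_nonpos.2 hLx), max_eq_left (sub_nonneg.2 hLx)]
    linear_combination (c * (x - L) ^ 2) * hexp

theorem integral_Ici_exp_neg_mul_sub_sq (L : ℝ) :
    ∫ x in Ici 0, exp (-x) * (x - L) ^ 2 = (1 - L) ^ 2 + 1 := by
  have hderiv (x : ℝ) : HasDerivAt (fun y => -(exp (-y) * ((y - L + 1) ^ 2 + 1)))
      (exp (-x) * (x - L) ^ 2) x := by
    have hsq : HasDerivAt (fun y => (y - L + 1) ^ 2 + 1) (2 * (x - L + 1)) x := by
      simpa using ((((hasDerivAt_id' x).sub_const L).add_const 1).pow 2).add_const 1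
    exact ((hasDerivAt_neg' x).exp.mul hsq).neg.congr_deriv (by ring)
  have hlim : Tendsto (fun y => -(exp (-y) * ((y - L + 1) ^ 2 + 1))) atTop (𝓝 0) := by
    have h := ((tendsto_pow_mul_exp_neg_atTop_nhds_zero 2).add
      ((tendsto_pow_mul_exp_neg_atTop_nhds_zero 1).const_mul (2 * (1 - L)))).add
      ((tendsto_pow_mul_exp_neg_atTop_nhds_zero 0).const_mul ((1 - L) ^ 2 + 1))
    rw [show (0 : ℝ) = -(0 + 2 * (1 - L) * 0 + ((1 - L) ^ 2 + 1) * 0) by ring]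
    exact h.neg.congr fun y => by ring
  rw [integral_Ici_eq_integral_Ioi, integral_Ioi_of_hasDerivAt_of_nonneg
    (hderiv 0).continuousAt.continuousWithinAt (fun x _ => hderiv x) (fun x _ => by positivity)
    hlim]
  simp only [neg_zero, exp_zero]
  ring

theorem lintegral_ofReal_mul_exp_neg_sub_le {c L : ℝ} (hL0 : 0 ≤ L) (hL1 : L ≤ 1)
    (hc : c * ((1 - L) ^ 2 + 1) = 1) {u : ℝ} (hu : 0 ≤ u) :
    ∫⁻ x in Ici 0, ENNReal.ofReal (c * exp (-x) * (x - L) ^ 2 - u) ≤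
      ∫⁻ x in Ici 0, ENNReal.ofReal (exp (-x) - u) := by
  have := isProbabilityMeasure_cutPointMeasure (c := c) (by nlinarith [sq_nonneg (1 - L)]) hL0
    (by nlinarith)
  have := isProbabilityMeasure_gammaMeasure two_pos one_pos
  rw [setLIntegral_congr_fun measurableSet_Ici fun x hx => by
    rw [← integral_moveTail_exp_neg_mixture hL0 hL1 hc hx]]
  have hK : Measurable
      (uncurry fun (q : ℝ × ℝ) x => moveTail (fun y => exp (-y)) q.1 (L + q.2) x) :=
    (measurable_moveTail (by fun_prop)).comp
      (by fun_prop : Measurable fun z : (ℝ × ℝ) × ℝ => ((z.1.1, L + z.1.2), z.2))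
  refine lintegral_ofReal_integral_sub_le hK hu ?_
  filter_upwards [Measure.quasiMeasurePreserving_fst.ae (ae_mem_Icc_cutPointMeasure hL0),
    Measure.quasiMeasurePreserving_snd.ae (ae_nonneg_gammaMeasure 2 1)] with q hp ha
  exact (setLIntegral_Ici_ofReal_moveTail_sub _ hp.1 (by linarith [hp.2]) hu).le

theorem integral_max_mul_exp_neg_sub_le {c L : ℝ} (hL0 : 0 ≤ L) (hL1 : L ≤ 1)
    (hc : c * ((1 - L) ^ 2 + 1) = 1) {u : ℝ} (hu : 0 ≤ u) :
    ∫ x in Ici 0, max (c * exp (-x) * (x - L) ^ 2 - u) 0 ≤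
      ∫ x in Ici 0, max (exp (-x) - u) 0 := by
  have hexp : IntegrableOn (fun x => exp (-x)) (Ici 0) := by
    rw [integrableOn_Ici_iff_integrableOn_Ioi]
    simpa using exp_neg_integrableOn_Ioi 0 one_pos
  refine integral_max_sub_le_of_lintegral_le (by fun_prop) (by fun_prop) ?_
    (lintegral_ofReal_mul_exp_neg_sub_le hL0 hL1 hc hu)
  exact ((lintegral_mono fun x => ENNReal.ofReal_le_ofReal (sub_le_self _ hu)).trans_lt
    hexp.lintegral_lt_top).ne

/-- For every `t ∈ [0,1]`, `f₀(x) = e^{−x}` majorizes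
`g_t(x) = ((t+1)/2) e^{−x} (x − 1 + √((1−t)/(1+t)))²` on ℝ₊. -/
theorem f0_majorizes_gt (t : ℝ) (ht₀ : 0 ≤ t) (ht₁ : t ≤ 1) :
    (∀ u : ℝ, 0 ≤ u →
      ∫ x in Ici (0:ℝ),
          max ((t + 1) / 2 * exp (-x) * (x - 1 + Real.sqrt ((1 - t) / (1 + t)))^2 - u) 0 ≤
        ∫ x in Ici (0:ℝ), max (exp (-x) - u) 0) ∧
    ∫ x in Ici (0:ℝ), (t + 1) / 2 * exp (-x) * (x - 1 + Real.sqrt ((1 - t) / (1 + t)))^2 =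
      ∫ x in Ici (0:ℝ), exp (-x) := by
  set s := Real.sqrt ((1 - t) / (1 + t))
  have hs0 : 0 ≤ s := sqrt_nonneg _
  have hs1 : s ≤ 1 := sqrt_le_one.2 ((div_le_one (by linarith)).2 (by linarith))
  have hs2 : s ^ 2 = (1 - t) / (1 + t) := sq_sqrt (div_nonneg (by linarith) (by linarith))
  have hc : (t + 1) / 2 * ((1 - (1 - s)) ^ 2 + 1) = 1 := by
    rw [sub_sub_cancel, hs2]
    field_simp
    ring
  simp_rw [show ∀ x : ℝ, x - 1 + s = x - (1 - s) from fun x => by ring]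
  refine ⟨fun u hu => integral_max_mul_exp_neg_sub_le (by linarith) (by linarith) hc hu, ?_⟩
  simp_rw [mul_assoc]
  rw [integral_const_mul, integral_Ici_exp_neg_mul_sub_sq, hc, integral_Ici_eq_integral_Ioi,
    integral_exp_neg_Ioi_zero]
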